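/- arXiv:1408.6883 — 6 statements merged into one kernel-verified Lean document; each statement's English description precedes it below -/
import Mathlib

section
/- Let p be a prime, n ≥ 3 an integer and γ ≤ -2 an integer. Then there is no p-ary nearly perfect sequence of period n and type γ; that is, there is no sequence a of period n with each a_i a p-th root of unity such that C_a(t) = γ for all 1 ≤ t ≤ n-1. -/
/-! Summing the autocorrelation over all shifts gives `|∑ aᵢ|² ≥ 0`. For a unimodular
sequence of type `γ` this sum is `n + (n - 1) γ`, which is negative once `n ≥ 3` and
`γ ≤ -2`. -/

section Autocorrelation

variable {G R : Type*} [Fintype G] [AddGroup G]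

def autocorrelation [NonUnitalSemiring R] [StarRing R] (a : G → R) (t : G) : R :=
  ∑ i, a i * star (a (i + t))

theorem sum_autocorrelation [NonUnitalSemiring R] [StarRing R] (a : G → R) :
    ∑ t, autocorrelation a t = (∑ i, a i) * star (∑ i, a i) := by
  simp only [autocorrelation]
  rw [Finset.sum_comm, Finset.sum_mul, star_sum]
  refine Fintype.sum_congr _ _ fun i => ?_
  rw [Finset.mul_sum]
  exact Fintype.sum_equiv (Equiv.addLeft i) _ _ fun t => rfl

theorem autocorrelation_zero_of_norm_eq_one {a : G → ℂ} (ha : ∀ i, ‖a i‖ = 1) :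
    autocorrelation a 0 = Fintype.card G := by
  simp [autocorrelation, Complex.mul_conj', ha]

theorem card_add_card_sub_one_mul_nonneg_of_autocorrelation_eq [DecidableEq G] {a : G → ℂ}
    (ha : ∀ i, ‖a i‖ = 1) {γ : ℝ} (hγ : ∀ t ≠ 0, autocorrelation a t = γ) :
    0 ≤ (Fintype.card G : ℝ) + (Fintype.card G - 1) * γ := by
  have hsum : ∑ t, autocorrelation a t = Fintype.card G + (Fintype.card G - 1) * (γ : ℂ) := by
    rw [← Finset.add_sum_erase _ _ (Finset.mem_univ 0), autocorrelation_zero_of_norm_eq_one ha,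
      Finset.sum_congr rfl fun t ht => hγ t (Finset.ne_of_mem_erase ht), Finset.sum_const,
      Finset.card_erase_of_mem (Finset.mem_univ _), nsmul_eq_mul, Finset.card_univ,
      Nat.cast_pred Fintype.card_pos]
  rw [sum_autocorrelation, Complex.star_def, Complex.mul_conj'] at hsum
  have hnorm : ‖∑ i, a i‖ ^ 2 = (Fintype.card G : ℝ) + (Fintype.card G - 1) * γ := by
    exact_mod_cast hsum
  exact hnorm ▸ sq_nonneg _

end Autocorrelation

theorem stmt_2 (p : ℕ) (hp : p.Prime) (n : ℕ) [NeZero n] (hn : 3 ≤ n) (γ : ℤ)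
    (hγ : γ ≤ -2) (ζ : ℂ) (hζ : IsPrimitiveRoot ζ p) :
    ¬ ∃ a : ZMod n → ℂ, (∀ i, ∃ k : ℕ, a i = ζ ^ k) ∧
      (∀ t : ZMod n, t ≠ 0 →
        ∑ i : ZMod n, a i * (starRingEnd ℂ) (a (i + t)) = γ) := by
  rintro ⟨a, ha, hC⟩
  have hunit : ∀ i, ‖a i‖ = 1 := fun i => by
    obtain ⟨k, hk⟩ := ha i
    rw [hk, norm_pow, hζ.norm'_eq_one hp.ne_zero, one_pow]
  have hbound := card_add_card_sub_one_mul_nonneg_of_autocorrelation_eq hunit (γ := γ)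
    fun t ht => by simpa [autocorrelation] using hC t ht
  rw [ZMod.card] at hbound
  have hn' : (3 : ℝ) ≤ n := by exact_mod_cast hn
  have hγ' : (γ : ℝ) ≤ -2 := by exact_mod_cast hγ
  nlinarith
end

section
/- Let p be a prime and a a p-ary nearly perfect sequence of period n ≥ 2 and type γ ∈ ℤ. Then p divides n - γ. -/
/-! The autocorrelation at shift `1` alone suffices: since `conj ζ = ζ ^ (p - 1)`, it is a sum of
`n` powers of `ζ`, so `∑ X ^ eᵢ - γ` vanishes at `ζ` and is divisible by the `p`-th cyclotomic
polynomial, the minimal polynomial of `ζ` over `ℤ`. Evaluating at `1`, where that cyclotomic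
polynomial takes the value `p`, gives `p ∣ n - γ`. -/

open Polynomial

theorem Complex.conj_eq_pow_pred_of_pow_eq_one {ζ : ℂ} {k : ℕ} (hζ : ζ ^ k = 1) (hk : k ≠ 0) :
    starRingEnd ℂ ζ = ζ ^ (k - 1) := by
  rw [← Complex.inv_eq_conj (Complex.norm_eq_one_of_pow_eq_one hζ hk)]
  refine (eq_inv_of_mul_eq_one_left ?_).symm
  rw [← pow_succ, Nat.sub_add_cancel (Nat.pos_of_ne_zero hk), hζ]

theorem IsPrimitiveRoot.prime_dvd_card_sub_of_sum_pow_eq_intCast {K ι : Type*} [Field K]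
    [CharZero K] {p : ℕ} [hp : Fact p.Prime] {ζ : K} (hζ : IsPrimitiveRoot ζ p) (s : Finset ι)
    (e : ι → ℕ) (γ : ℤ) (hsum : ∑ i ∈ s, ζ ^ e i = γ) : (p : ℤ) ∣ s.card - γ := by
  set f : ℤ[X] := ∑ i ∈ s, X ^ e i - C γ
  have hfζ : aeval ζ f = 0 := by simp [f, hsum]
  obtain ⟨g, hg⟩ := minpoly.isIntegrallyClosed_dvd (hζ.isIntegral hp.out.pos) hfζ
  rw [← cyclotomic_eq_minpoly hζ hp.out.pos] at hg
  exact ⟨g.eval 1, by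
    simpa [f, eval_finsetSum, eval_one_cyclotomic_prime] using congrArg (eval 1) hg⟩

theorem stmt_4 (p : ℕ) (hp : p.Prime) (n : ℕ) [NeZero n] (hn : 2 ≤ n) (γ : ℤ)
    (ζ : ℂ) (hζ : IsPrimitiveRoot ζ p) (b : ZMod n → ℕ) (a : ZMod n → ℂ)
    (ha : ∀ i, a i = ζ ^ b i)
    (hnps : ∀ t : ZMod n, t ≠ 0 →
      ∑ i : ZMod n, a i * (starRingEnd ℂ) (a (i + t)) = γ) :
    (p : ℤ) ∣ (n : ℤ) - γ := by
  have : Fact (1 < n) := ⟨hn⟩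
  have : Fact p.Prime := ⟨hp⟩
  have hconj := Complex.conj_eq_pow_pred_of_pow_eq_one hζ.pow_eq_one hp.ne_zero
  have hshift_one : ∑ i : ZMod n, ζ ^ (b i + (p - 1) * b (i + 1)) = γ := by
    rw [← hnps 1 one_ne_zero]
    exact Finset.sum_congr rfl fun i _ => by rw [ha, ha, map_pow, hconj, ← pow_mul, ← pow_add]
  simpa [ZMod.card] using hζ.prime_dvd_card_sub_of_sum_pow_eq_intCast _ _ γ hshift_one
end

section
/- Let p be a prime and a = (a_0, a_1, ..., a_n) an almost p-ary nearly perfect sequence of period n+1 and type γ ∈ ℤ (so a_0 = 0 and a_1,...,a_n are p-th roots of unity). Then p divides n - γ - 1. -/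
open Polynomial Finset

theorem stmt_5 (p : ℕ) (hp : p.Prime) (n : ℕ) (hn : 2 ≤ n) (γ : ℤ)
    (ζ : ℂ) (hζ : IsPrimitiveRoot ζ p) (b : ZMod (n + 1) → ℕ) (a : ZMod (n + 1) → ℂ)
    (ha0 : a 0 = 0) (ha : ∀ i : ZMod (n + 1), i ≠ 0 → a i = ζ ^ b i)
    (hnps : ∀ t : ZMod (n + 1), t ≠ 0 →
      ∑ i : ZMod (n + 1), a i * (starRingEnd ℂ) (a (i + t)) = γ) :
    (p : ℤ) ∣ (n : ℤ) - γ - 1 := by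
  haveI : Fact (1 < n + 1) := ⟨by omega⟩
  haveI : NeZero (n + 1) := ⟨by omega⟩
  haveI : Fact p.Prime := ⟨hp⟩
  have hζp : ζ ^ p = 1 := hζ.pow_eq_one
  have hζne : ζ ≠ 0 := fun h => by
    rw [h, zero_pow hp.ne_zero] at hζp; exact zero_ne_one hζp
  have hnorm : ‖ζ‖ = 1 := Complex.norm_eq_one_of_pow_eq_one hζp hp.ne_zero
  have hconj : (starRingEnd ℂ) ζ = ζ ^ (p - 1) := by
    rw [← Complex.inv_eq_conj hnorm]
    refine inv_eq_of_mul_eq_one_right ?_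
    rw [← pow_succ']
    have hppos := hp.pos
    have h2 : p - 1 + 1 = p := by omega
    rw [h2, hζp]
  -- choose t = 1
  have ht : (1 : ZMod (n + 1)) ≠ 0 := one_ne_zero
  have hsum := hnps 1 ht
  set s : Finset (ZMod (n + 1)) := univ \ {0, -1} with hs
  set e : ZMod (n + 1) → ℕ := fun i => b i + (p - 1) * b (i + 1) with he
  have hterm : ∀ i ∈ s, a i * (starRingEnd ℂ) (a (i + 1)) = ζ ^ e i := by
    intro i hi
    simp only [hs, mem_sdiff, mem_insert, mem_singleton, mem_univ, true_and] at hi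
    push_neg at hi
    have hi1 : i + 1 ≠ 0 := by
      intro h; exact hi.2 (by linear_combination h)
    rw [ha i hi.1, ha (i + 1) hi1, map_pow, hconj, he, pow_add, ← pow_mul]
  have hsum2 : ∑ i ∈ s, ζ ^ e i = (γ : ℂ) := by
    rw [← hsum]
    rw [← Finset.sum_subset (Finset.sdiff_subset : s ⊆ univ)]
    · exact Finset.sum_congr rfl fun i hi => (hterm i hi).symm
    · intro i _ hi
      simp only [hs, mem_sdiff, mem_univ, true_and, not_not] at hi
      rcases (by simpa using hi : i = 0 ∨ i = -1) with h | h
      · rw [h, ha0, zero_mul]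
      · rw [h]
        have : (-1 : ZMod (n+1)) + 1 = 0 := by ring
        rw [this, ha0, map_zero, mul_zero]
  -- polynomial argument
  set P : ℤ[X] := (∑ i ∈ s, X ^ e i) - C γ with hP
  have hroot : aeval ζ P = 0 := by
    simp [hP, map_sum, hsum2]
  have hdvd : cyclotomic p ℤ ∣ P := by
    rw [Polynomial.cyclotomic_eq_minpoly hζ hp.pos]
    exact minpoly.isIntegrallyClosed_dvd (hζ.isIntegral hp.pos) hroot
  have heval : (p : ℤ) ∣ P.eval 1 := by
    have := Polynomial.eval_one_cyclotomic_prime (R := ℤ) (p := p)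
    obtain ⟨q, hq⟩ := hdvd
    rw [hq, eval_mul, this]
    exact Dvd.intro _ rfl
  have hcard : s.card = n - 1 := by
    rw [hs, Finset.card_sdiff_of_subset (Finset.subset_univ _)]
    have h01 : (0 : ZMod (n+1)) ≠ -1 := by
      intro h
      apply ht
      linear_combination h
    rw [Finset.card_insert_of_notMem (by simpa using h01), Finset.card_singleton,
      Finset.card_univ, ZMod.card]
    omega
  have hPe : P.eval 1 = (s.card : ℤ) - γ := by
    simp [hP, eval_finset_sum]
  rw [hPe, hcard] at heval
  have : ((n - 1 : ℕ) : ℤ) = (n : ℤ) - 1 := by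
    have := hn; push_cast [Nat.cast_sub (by omega : 1 ≤ n)]; ring
  rw [this] at heval
  convert heval using 1
  ring
end

section
/- Let p be a prime and R an (n+1, p, n, (n-1)/p)-relative difference set in G = ℤ_{n+1} × ℤ_p relative to the subgroup {0} × ℤ_p. For i ∈ {0,...,p-1} let s_i be the number of elements of R whose second component is i. Then Σ_{j=0}^{p-1} s_j^2 = n(n+p-1)/p, and for each i with 1 ≤ i ≤ ⌈(p-1)/2⌉, Σ_{j=0}^{p-1} s_j·s_{j-i} = n(n-1)/p, where subscripts are taken modulo p. -/
theorem stmt_9 (p n : ℕ) [Fact p.Prime] (hn : 1 ≤ n) (hdvd : p ∣ n - 1)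
    (R : Finset (ZMod (n + 1) × ZMod p)) (hcard : R.card = n)
    (hout : ∀ g : ZMod (n + 1) × ZMod p, g.1 ≠ 0 →
      ((R ×ˢ R).filter (fun q => q.1 - q.2 = g)).card = (n - 1) / p)
    (hin : ∀ g : ZMod (n + 1) × ZMod p, g.1 = 0 → g ≠ 0 →
      ((R ×ˢ R).filter (fun q => q.1 - q.2 = g)).card = 0) :
    (∑ j : ZMod p, ((R.filter (fun x => x.2 = j)).card) ^ 2 = n * (n + p - 1) / p) ∧
    (∀ m : ℕ, 1 ≤ m → m ≤ p / 2 →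
      ∑ j : ZMod p, (R.filter (fun x => x.2 = j)).card *
        (R.filter (fun x => x.2 = j - (m : ZMod p))).card = n * (n - 1) / p) := by
  have hp : p.Prime := Fact.out
  have hp0 : 0 < p := hp.pos
  obtain ⟨k, hk⟩ := hdvd
  -- Key double counting: for each i, Σ_j s_j s_{j-i} equals the sum over a of pair counts
  have key : ∀ i : ZMod p,
      (∑ j : ZMod p, (R.filter (fun x => x.2 = j)).card *
        (R.filter (fun x => x.2 = j - i)).card) =
      ∑ a : ZMod (n+1), ((R ×ˢ R).filter (fun q => q.1 - q.2 = (a, i))).card := by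
    intro i
    have h1 : ((R ×ˢ R).filter (fun q => q.1.2 - q.2.2 = i)).card
        = ∑ j : ZMod p, (R.filter (fun x => x.2 = j)).card *
          (R.filter (fun x => x.2 = j - i)).card := by
      rw [Finset.card_eq_sum_card_fiberwise
        (f := fun q => q.1.2) (t := Finset.univ) (fun x _ => Finset.mem_univ _)]
      refine Finset.sum_congr rfl (fun j _ => ?_)
      rw [← Finset.card_product]
      congr 1
      ext q
      simp only [Finset.mem_filter, Finset.mem_product]
      constructor
      · rintro ⟨⟨⟨ha, hb⟩, hc⟩, hd⟩
        refine ⟨⟨ha, hd⟩, hb, ?_⟩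
        rw [← hc, ← hd]; ring
      · rintro ⟨⟨ha, hd⟩, hb, hc⟩
        refine ⟨⟨⟨ha, hb⟩, ?_⟩, hd⟩
        rw [hd, hc]; ring
    have h2 : ((R ×ˢ R).filter (fun q => q.1.2 - q.2.2 = i)).card
        = ∑ a : ZMod (n+1), ((R ×ˢ R).filter (fun q => q.1 - q.2 = (a, i))).card := by
      rw [Finset.card_eq_sum_card_fiberwise
        (f := fun q => q.1.1 - q.2.1) (t := Finset.univ) (fun x _ => Finset.mem_univ _)]
      refine Finset.sum_congr rfl (fun a _ => ?_)
      congr 1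
      ext q
      simp only [Finset.mem_filter, Prod.ext_iff]
      constructor
      · rintro ⟨⟨ha, hb⟩, hc⟩; exact ⟨ha, hc, hb⟩
      · rintro ⟨ha, hb, hc⟩; exact ⟨⟨ha, hc⟩, hb⟩
    rw [← h1, h2]
  -- Each nonzero-a term equals k
  have hcount : ∀ i : ZMod p,
      (∑ a : ZMod (n+1), ((R ×ˢ R).filter (fun q => q.1 - q.2 = (a, i))).card) =
      ((R ×ˢ R).filter (fun q => q.1 - q.2 = ((0 : ZMod (n+1)), i))).card + n * k := by
    intro i
    rw [← Finset.add_sum_erase _ _ (Finset.mem_univ (0 : ZMod (n+1)))]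
    congr 1
    rw [Finset.sum_congr rfl (fun a ha => by
      rw [hout (a, i) (Finset.ne_of_mem_erase ha), hk, Nat.mul_div_cancel_left k hp0])]
    rw [Finset.sum_const, smul_eq_mul, Finset.card_erase_of_mem (Finset.mem_univ _),
      Finset.card_univ, ZMod.card]
    simp
  constructor
  · -- i = 0 case
    have hdiag : ((R ×ˢ R).filter
        (fun q => q.1 - q.2 = ((0 : ZMod (n+1)), (0 : ZMod p)))).card = n := by
      have himg : (R ×ˢ R).filter
          (fun q => q.1 - q.2 = ((0 : ZMod (n+1)), (0 : ZMod p)))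
          = R.image (fun r => (r, r)) := by
        ext q
        simp only [Finset.mem_filter, Finset.mem_product, Finset.mem_image]
        constructor
        · rintro ⟨⟨ha, hb⟩, hc⟩
          have h00 : ((0 : ZMod (n+1)), (0 : ZMod p)) = (0 : ZMod (n+1) × ZMod p) := rfl
          rw [h00, sub_eq_zero] at hc
          exact ⟨q.1, ha, Prod.ext rfl hc⟩
        · rintro ⟨r, hr, hrq⟩
          have h1 : q.1 = r := by rw [← hrq]
          have h2 : q.2 = r := by rw [← hrq]
          refine ⟨⟨by rw [h1]; exact hr, by rw [h2]; exact hr⟩, ?_⟩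
          rw [h1, h2, sub_self]
          rfl
      rw [himg, Finset.card_image_of_injective _ (fun a b h => (Prod.ext_iff.mp h).1), hcard]
    have h0 : (∑ j : ZMod p, ((R.filter (fun x => x.2 = j)).card) ^ 2)
        = ∑ j : ZMod p, (R.filter (fun x => x.2 = j)).card *
          (R.filter (fun x => x.2 = j - (0 : ZMod p))).card := by
      refine Finset.sum_congr rfl (fun j _ => ?_)
      rw [sub_zero, sq]
    rw [h0, key 0, hcount 0, hdiag]
    have h3 : n + p - 1 = p * (k + 1) := by rw [Nat.mul_add, mul_one, ← hk]; omega
    rw [h3, show n * (p * (k + 1)) = p * (n * (k + 1)) by ring,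
      Nat.mul_div_cancel_left _ hp0]
    ring
  · intro m hm1 hm2
    have hmlt : m < p := lt_of_le_of_lt hm2 (Nat.div_lt_self hp0 one_lt_two)
    have hi : (m : ZMod p) ≠ 0 := by
      intro h
      have := (ZMod.natCast_eq_zero_iff m p).mp h
      have := Nat.le_of_dvd (by omega) this
      omega
    rw [key, hcount, hin ((0 : ZMod (n+1)), (m : ZMod p)) rfl
      (by simp [Prod.ext_iff, hi]), hk,
      show n * (p * k) = p * (n * k) by ring, Nat.mul_div_cancel_left _ hp0, zero_add]
end

section
/- Let p be a prime, n ≥ 2, H = ⟨h⟩ cyclic of order n, P = ⟨g⟩ cyclic of order p, G = H × P, and let a = (a_0,...,a_{n-1}) be a p-ary sequence with a_i = ζ_p^{b_i}. Set R = {g^{b_i}h^i : 0 ≤ i ≤ n-1} ⊆ G. Then a is a nearly perfect sequence of type γ if and only if R is an (n, p, n, (n-γ)/p + γ, 0, (n-γ)/p)-direct product difference set in G relative to H and P. -/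
/-- The subset `R = {(i, b i) : i ∈ ℤ_n}` of `ℤ_n × ℤ_p` associated to a `p`-ary
sequence with exponents `b`. -/
def Rset (n p : ℕ) [NeZero n] (b : ZMod n → ℕ) : Finset (ZMod n × ZMod p) :=
  Finset.univ.image fun i : ZMod n => (i, (b i : ZMod p))

/-- Number of representations of `g` as a difference `r₁ - r₂`, `r₁ ≠ r₂ ∈ R`. -/
def diffCount (n p : ℕ) [NeZero n] (b : ZMod n → ℕ) (g : ZMod n × ZMod p) : ℕ :=
  ((Rset n p b ×ˢ Rset n p b).filter (fun q => q.1 ≠ q.2 ∧ q.1 - q.2 = g)).card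


section Aux
variable {n p : ℕ} [NeZero n] [NeZero p] {b : ZMod n → ℕ}

lemma mem_Rset {q : ZMod n × ZMod p} : q ∈ Rset n p b ↔ q.2 = (b q.1 : ZMod p) := by
  simp only [Rset, Finset.mem_image, Finset.mem_univ, true_and, Prod.ext_iff]
  constructor
  · rintro ⟨i, h1, h2⟩; subst h1; exact h2.symm
  · intro h; exact ⟨q.1, rfl, h.symm⟩

lemma Rset_card : (Rset n p b).card = n := by
  rw [Rset, Finset.card_image_of_injective _ (fun i j h => (Prod.ext_iff.1 h).1),
    Finset.card_univ, ZMod.card]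

lemma diffCount_zero_left (y : ZMod p) : diffCount n p b (0, y) = 0 := by
  rw [diffCount, Finset.card_eq_zero, Finset.filter_eq_empty_iff]
  rintro ⟨q1, q2⟩ hq
  simp only [Finset.mem_product] at hq
  rintro ⟨hne, hdiff⟩
  apply hne
  have h1 := mem_Rset.1 hq.1
  have h2 := mem_Rset.1 hq.2
  have hx : q1.1 - q2.1 = 0 := (Prod.ext_iff.1 hdiff).1
  have : q1.1 = q2.1 := by linear_combination hx
  exact Prod.ext this (by rw [h1, h2, this])

lemma diffCount_eq (x : ZMod n) (y : ZMod p) (hx : x ≠ 0) :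
    diffCount n p b (x, y) =
      (Finset.univ.filter fun j : ZMod n => (b (j + x) : ZMod p) - (b j : ZMod p) = y).card := by
  rw [diffCount]
  apply Finset.card_bij' (fun q _ => q.2.1)
    (fun j _ => ((j + x, (b (j + x) : ZMod p)), (j, (b j : ZMod p))))
  · rintro ⟨q1, q2⟩ hq
    simp only [Finset.mem_filter, Finset.mem_product] at hq
    obtain ⟨⟨hm1, hm2⟩, hne, hdiff⟩ := hq
    have h1 := mem_Rset.1 hm1
    have h2 := mem_Rset.1 hm2
    obtain ⟨hdx, hdy⟩ := Prod.ext_iff.1 hdiff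
    simp only [Prod.fst_sub, Prod.snd_sub] at hdx hdy
    simp only [Finset.mem_filter, Finset.mem_univ, true_and]
    have hq1 : q1.1 = q2.1 + x := by linear_combination hdx
    rw [← hq1, ← h1, ← h2]
    exact hdy
  · intro j hj
    simp only [Finset.mem_filter, Finset.mem_univ, true_and] at hj
    simp only [Finset.mem_filter, Finset.mem_product]
    refine ⟨⟨mem_Rset.2 rfl, mem_Rset.2 rfl⟩, ?_, ?_⟩
    · intro h
      exact hx (by linear_combination (Prod.ext_iff.1 h).1)
    · simp only [Prod.mk_sub_mk]
      exact Prod.ext (by simp [add_sub_cancel_right]) (by simpa using hj)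
  · rintro ⟨q1, q2⟩ hq
    simp only [Finset.mem_filter, Finset.mem_product] at hq
    obtain ⟨⟨hm1, hm2⟩, hne, hdiff⟩ := hq
    have h1 := mem_Rset.1 hm1
    have h2 := mem_Rset.1 hm2
    obtain ⟨hdx, hdy⟩ := Prod.ext_iff.1 hdiff
    simp only [Prod.fst_sub, Prod.snd_sub] at hdx hdy
    have hq1 : q2.1 + x = q1.1 := by linear_combination -hdx
    ext <;> simp [hq1, ← h1, ← h2]
  · intro j hj; rfl

lemma diffCount_total (x : ZMod n) (hx : x ≠ 0) :
    ∑ y : ZMod p, diffCount n p b (x, y) = n := by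
  have : ∀ y : ZMod p, diffCount n p b (x, y) =
      (Finset.univ.filter fun j : ZMod n => (b (j + x) : ZMod p) - (b j : ZMod p) = y).card :=
    fun y => diffCount_eq x y hx
  simp only [this]
  rw [← Finset.card_eq_sum_card_fiberwise
    (f := fun j : ZMod n => (b (j + x) : ZMod p) - (b j : ZMod p)) (t := Finset.univ)
    (fun _ _ => Finset.mem_univ _), Finset.card_univ, ZMod.card]

end Aux

section Zeta
variable {p : ℕ} [NeZero p] {ζ : ℂ} (hζ : IsPrimitiveRoot ζ p)
include hζ

lemma pow_eq_pow_val (m : ℕ) : ζ ^ m = ζ ^ ((m : ZMod p)).val := by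
  rw [ZMod.val_natCast]
  conv_lhs => rw [← Nat.div_add_mod m p]
  rw [pow_add, pow_mul, hζ.pow_eq_one, one_pow, one_mul]

lemma pow_val_add (u v : ZMod p) : ζ ^ (u + v).val = ζ ^ u.val * ζ ^ v.val := by
  rw [← pow_add, pow_eq_pow_val hζ (u.val + v.val)]
  congr 2
  push_cast
  rw [ZMod.natCast_val, ZMod.natCast_val, ZMod.cast_id, ZMod.cast_id]

lemma conj_pow_val (u : ZMod p) : (starRingEnd ℂ) (ζ ^ u.val) = ζ ^ (-u).val := by
  have hone : ζ ^ u.val * ζ ^ (-u).val = 1 := by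
    rw [← pow_val_add hζ, add_neg_cancel, ZMod.val_zero, pow_zero]
  have hnorm : ‖ζ‖ = 1 := by
    have h1 : ‖ζ‖ ^ p = 1 := by rw [← norm_pow, hζ.pow_eq_one, norm_one]
    rcases lt_trichotomy ‖ζ‖ 1 with h | h | h
    · have := pow_lt_one₀ (norm_nonneg ζ) h (NeZero.ne p); rw [h1] at this; exact absurd this (lt_irrefl 1)
    · exact h
    · have := one_lt_pow₀ h (NeZero.ne p); rw [h1] at this; exact absurd this (lt_irrefl 1)
  have : (starRingEnd ℂ) (ζ ^ u.val) = (ζ ^ u.val)⁻¹ := by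
    rw [← Complex.inv_eq_conj]
    rw [norm_pow, hnorm, one_pow]
  rw [this]
  exact inv_eq_of_mul_eq_one_right hone

omit hζ in
lemma sum_zmod_val (g : ℕ → ℂ) : ∑ y : ZMod p, g y.val = ∑ k ∈ Finset.range p, g k := by
  apply Finset.sum_nbij' (i := fun y : ZMod p => y.val) (j := fun k => (k : ZMod p))
  · intro y _; exact Finset.mem_range.2 (ZMod.val_lt y)
  · intro k _; exact Finset.mem_univ _
  · intro y _; simp [ZMod.natCast_val, ZMod.cast_id]
  · intro k hk; exact ZMod.val_natCast_of_lt (Finset.mem_range.1 hk)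
  · intro y _; rfl

lemma sum_pow_val_eq_zero (hp : 1 < p) : ∑ y : ZMod p, ζ ^ y.val = 0 := by
  rw [sum_zmod_val (fun k => ζ ^ k)]
  exact hζ.geom_sum_eq_zero hp

end Zeta

open Polynomial in
lemma key_constant {p : ℕ} [NeZero p] (hp : p.Prime) {ζ : ℂ} (hζ : IsPrimitiveRoot ζ p)
    (c : ZMod p → ℤ) (h : ∑ y : ZMod p, (c y : ℂ) * ζ ^ y.val = 0) :
    ∀ y : ZMod p, c y = c 0 := by
  haveI : Fact p.Prime := ⟨hp⟩
  set Q : ℤ[X] := ∑ y : ZMod p, monomial y.val (c y) with hQ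
  have haev : aeval ζ Q = 0 := by
    rw [hQ, map_sum]
    simpa [aeval_monomial] using h
  have hint : IsIntegral ℤ ζ := hζ.isIntegral hp.pos
  have hdvd : minpoly ℤ ζ ∣ Q := minpoly.isIntegrallyClosed_dvd hint haev
  rw [← Polynomial.cyclotomic_eq_minpoly hζ hp.pos] at hdvd
  obtain ⟨S, hS⟩ := hdvd
  have hcoeff : ∀ k, k < p → Q.coeff k = c (k : ZMod p) := by
    intro k hk
    rw [hQ, finset_sum_coeff]
    rw [Finset.sum_eq_single ((k : ZMod p))]
    · rw [coeff_monomial, if_pos (ZMod.val_natCast_of_lt hk)]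
    · intro y _ hy
      rw [coeff_monomial, if_neg]
      intro hv
      exact hy (by rw [← hv, ZMod.natCast_val, ZMod.cast_id])
    · intro hy; exact absurd (Finset.mem_univ _) hy
  have hQdeg : Q.natDegree ≤ p - 1 := by
    rw [hQ]
    apply Polynomial.natDegree_sum_le_of_forall_le
    intro y _
    exact le_trans (natDegree_monomial_le _) (Nat.le_sub_one_of_lt (ZMod.val_lt y))
  have hcyc : (cyclotomic p ℤ).natDegree = p - 1 := by
    rw [natDegree_cyclotomic, Nat.totient_prime hp]
  rcases eq_or_ne S 0 with hS0 | hS0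
  · intro y
    have h0 : ∀ k, k < p → c (k : ZMod p) = 0 := by
      intro k hk
      rw [← hcoeff k hk, hS, hS0, mul_zero, coeff_zero]
    have := h0 y.val y.val_lt
    rw [ZMod.natCast_val, ZMod.cast_id] at this
    rw [this]; simpa using (h0 0 hp.pos).symm
  · have hQ0 : Q ≠ 0 := by
      rw [hS]
      exact mul_ne_zero (cyclotomic_ne_zero p ℤ) hS0
    have hdegS : S.natDegree = 0 := by
      have := natDegree_mul (cyclotomic_ne_zero p ℤ) hS0
      rw [← hS, hcyc] at this
      omega
    obtain ⟨s, hs⟩ := Polynomial.natDegree_eq_zero.mp hdegS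
    have hall : ∀ k, k < p → c (k : ZMod p) = s := by
      intro k hk
      rw [← hcoeff k hk, hS, ← hs, coeff_mul_C, cyclotomic_prime ℤ p, finset_sum_coeff]
      simp only [coeff_X_pow]
      rw [Finset.sum_ite_eq (Finset.range p) k (fun _ => (1:ℤ)), if_pos (Finset.mem_range.2 hk), one_mul]
    intro y
    have h1 := hall y.val y.val_lt
    rw [ZMod.natCast_val, ZMod.cast_id] at h1
    rw [h1]; simpa using (hall 0 hp.pos).symm

lemma corr_eq {n p : ℕ} [NeZero n] [NeZero p] {ζ : ℂ} (hζ : IsPrimitiveRoot ζ p)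
    {b : ZMod n → ℕ} {a : ZMod n → ℂ} (ha : ∀ i, a i = ζ ^ b i)
    (t : ZMod n) (ht : t ≠ 0) :
    ∑ i : ZMod n, a i * (starRingEnd ℂ) (a (i + t)) =
      ∑ y : ZMod p, (diffCount n p b (-t, y) : ℂ) * ζ ^ y.val := by
  set d : ZMod n → ZMod p := fun i => (b i : ZMod p) - (b (i + t) : ZMod p) with hd
  have hterm : ∀ i : ZMod n, a i * (starRingEnd ℂ) (a (i + t)) = ζ ^ (d i).val := by
    intro i
    rw [ha, ha, pow_eq_pow_val hζ (b i), pow_eq_pow_val hζ (b (i + t)),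
      conj_pow_val hζ, ← pow_val_add hζ, hd]
    simp only [← sub_eq_add_neg]
  rw [Finset.sum_congr rfl (fun i _ => hterm i)]
  rw [← Finset.sum_fiberwise Finset.univ d (fun i => ζ ^ (d i).val)]
  apply Finset.sum_congr rfl
  intro y _
  have hinner : ∑ i ∈ Finset.univ.filter (fun i => d i = y), ζ ^ (d i).val =
      ((Finset.univ.filter (fun i => d i = y)).card : ℂ) * ζ ^ y.val := by
    rw [Finset.sum_congr rfl (fun i hi => by
      rw [(Finset.mem_filter.1 hi).2]), Finset.sum_const, nsmul_eq_mul]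
  rw [hinner, diffCount_eq (-t) y (neg_ne_zero.2 ht)]
  congr 2
  apply Finset.card_bij (fun i _ => i + t)
  · intro i hi
    simp only [Finset.mem_filter, Finset.mem_univ, true_and] at hi ⊢
    rw [add_neg_cancel_right]
    exact hi
  · intro i _ j _ h
    exact add_right_cancel h
  · intro j hj
    simp only [Finset.mem_filter, Finset.mem_univ, true_and] at hj
    refine ⟨j - t, ?_, by ring⟩
    simp only [Finset.mem_filter, Finset.mem_univ, true_and, hd]
    rw [sub_add_cancel]
    rw [← hj]
    congr 2
    ring

theorem stmt_11 (p n : ℕ) (hp : p.Prime) [NeZero p] (hn : 2 ≤ n) [NeZero n]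
    (γ : ℤ) (ζ : ℂ) (hζ : IsPrimitiveRoot ζ p)
    (b : ZMod n → ℕ) (a : ZMod n → ℂ) (ha : ∀ i, a i = ζ ^ b i) :
    (∀ t : ZMod n, t ≠ 0 →
        ∑ i : ZMod n, a i * (starRingEnd ℂ) (a (i + t)) = γ) ↔
    ((p : ℤ) ∣ (n : ℤ) - γ ∧
     (Rset n p b).card = n ∧
     (∀ x : ZMod n, x ≠ 0 →
        (diffCount n p b (x, 0) : ℤ) = ((n : ℤ) - γ) / p + γ) ∧
     (∀ y : ZMod p, y ≠ 0 → (diffCount n p b (0, y) : ℤ) = 0) ∧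
     (∀ x : ZMod n, ∀ y : ZMod p, x ≠ 0 → y ≠ 0 →
        (diffCount n p b (x, y) : ℤ) = ((n : ℤ) - γ) / p)) := by
  haveI : Fact (1 < n) := ⟨hn⟩
  have hp0 : (p : ℤ) ≠ 0 := Int.natCast_ne_zero.2 (NeZero.ne p)
  constructor
  · intro H
    have key' : ∀ x : ZMod n, x ≠ 0 →
        (p : ℤ) ∣ (n : ℤ) - γ ∧
        (diffCount n p b (x, 0) : ℤ) = ((n : ℤ) - γ) / p + γ ∧
        ∀ y : ZMod p, y ≠ 0 → (diffCount n p b (x, y) : ℤ) = ((n : ℤ) - γ) / p := by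
      intro x hx
      have hC := H (-x) (neg_ne_zero.2 hx)
      rw [corr_eq hζ ha (-x) (neg_ne_zero.2 hx), neg_neg] at hC
      set c : ZMod p → ℤ :=
        fun y => (diffCount n p b (x, y) : ℤ) - if y = 0 then γ else 0 with hc
      have hsum0 : ∑ y : ZMod p, (c y : ℂ) * ζ ^ y.val = 0 := by
        have hite : ∑ y : ZMod p, (if y = 0 then (γ : ℂ) else 0) * ζ ^ y.val = γ := by
          rw [Finset.sum_eq_single (0 : ZMod p)]
          · simp [ZMod.val_zero]
          · intro y _ hy; rw [if_neg hy, zero_mul]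
          · intro hy; exact absurd (Finset.mem_univ _) hy
        calc ∑ y : ZMod p, (c y : ℂ) * ζ ^ y.val
            = ∑ y : ZMod p, ((diffCount n p b (x, y) : ℂ) * ζ ^ y.val
              - (if y = 0 then (γ : ℂ) else 0) * ζ ^ y.val) := by
              apply Finset.sum_congr rfl
              intro y _
              rw [hc]
              push_cast
              split <;> ring
          _ = γ - γ := by rw [Finset.sum_sub_distrib, hC, hite]
          _ = 0 := sub_self _
      have hconst := key_constant hp hζ c hsum0
      have htot : ∑ y : ZMod p, (diffCount n p b (x, y) : ℤ) = n := by
        have h := diffCount_total (p := p) (b := b) x hx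
        exact_mod_cast h
      have hcs : ∑ y : ZMod p, c y = (n : ℤ) - γ := by
        rw [hc, Finset.sum_sub_distrib, htot, Finset.sum_ite_eq' Finset.univ (0 : ZMod p)
          (fun _ => γ), if_pos (Finset.mem_univ _)]
      have hpc : (n : ℤ) - γ = p * c 0 := by
        rw [← hcs, Finset.sum_congr rfl (fun y _ => hconst y), Finset.sum_const,
          Finset.card_univ, ZMod.card, nsmul_eq_mul]
      have hdiv : ((n : ℤ) - γ) / p = c 0 := by
        rw [hpc, Int.mul_ediv_cancel_left _ hp0]
      have hc0 : c 0 = (diffCount n p b (x, 0) : ℤ) - γ := by rw [hc]; simp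
      refine ⟨⟨c 0, hpc⟩, ?_, ?_⟩
      · rw [hdiv, hc0]; ring
      · intro y hy
        have hcy : c y = (diffCount n p b (x, y) : ℤ) := by simp [hc, hy]
        rw [hdiv, ← hconst y]
        exact hcy.symm
    have h1 : (1 : ZMod n) ≠ 0 := one_ne_zero
    obtain ⟨hdvd, _, _⟩ := key' 1 h1
    refine ⟨hdvd, Rset_card, fun x hx => (key' x hx).2.1, ?_, fun x y hx hy => (key' x hx).2.2 y hy⟩
    intro y _
    rw [diffCount_zero_left]
    rfl
  · rintro ⟨hdvd, _, h0, _, hxy⟩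
    intro t ht
    have hx : -t ≠ 0 := neg_ne_zero.2 ht
    rw [corr_eq hζ ha t ht]
    set μ : ℤ := ((n : ℤ) - γ) / p with hμ
    have hzsum : ∑ y : ZMod p, ζ ^ y.val = 0 := sum_pow_val_eq_zero hζ hp.one_lt
    rw [← Finset.add_sum_erase _ _ (Finset.mem_univ (0 : ZMod p))]
    have herase : ∑ y ∈ Finset.univ.erase (0 : ZMod p), (diffCount n p b (-t, y) : ℂ) * ζ ^ y.val
        = (μ : ℂ) * ∑ y ∈ Finset.univ.erase (0 : ZMod p), ζ ^ y.val := by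
      rw [Finset.mul_sum]
      apply Finset.sum_congr rfl
      intro y hy
      have hy0 : y ≠ 0 := (Finset.mem_erase.1 hy).1
      have := hxy (-t) y hx hy0
      have : (diffCount n p b (-t, y) : ℂ) = (μ : ℂ) := by exact_mod_cast congrArg (Int.cast : ℤ → ℂ) this
      rw [this]
    have hesum : ∑ y ∈ Finset.univ.erase (0 : ZMod p), ζ ^ y.val = -1 := by
      have := Finset.add_sum_erase Finset.univ (fun y : ZMod p => ζ ^ y.val) (Finset.mem_univ (0 : ZMod p))
      rw [hzsum] at this
      simp only [ZMod.val_zero, pow_zero] at this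
      linear_combination this
    have hd0 : (diffCount n p b (-t, 0) : ℂ) = (μ : ℂ) + (γ : ℂ) := by
      exact_mod_cast congrArg (Int.cast : ℤ → ℂ) (h0 (-t) hx)
    rw [herase, hesum, hd0, ZMod.val_zero, pow_zero]
    ring
end

section
/- Let p be a prime and a an almost p-ary sequence of period n + s with exactly s zero-symbols (s ≥ 1) which is a nearly perfect sequence of type γ with 0 < |γ| < n. Let q ≠ p be a prime with q^r exactly dividing (γ+1)n + (s-1)γ, and suppose q is self-conjugate modulo up for some divisor u ≥ 1 of n+s with q ∤ u. Then r is even. -/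
/-!
Put `z = ∑ aᵢ ∈ ℤ[ζ]`. Summing all autocorrelations gives `z * conj z = (γ + 1) n + (s - 1) γ`.
On `ℤ[ζ]` complex conjugation is `ζ ↦ ζ ^ (p - 1)`, and since `q ^ j ≡ -1 [MOD p]` it agrees
modulo `q` with the `q ^ j`-th power Frobenius. So for `x ∈ ℤ[ζ]`, if `q ∣ x * conj x` then
`x ^ (q ^ j + 1) ≡ 0` modulo `q`, whence `q ∣ x` because `ℤ[ζ] / q ≅ 𝔽_q[X] / Φ_p` is reduced
(`q ≠ p`). Replacing `x` by `x / q` lowers the `q`-adic valuation of `x * conj x` by exactly two,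
so it is even.
-/

open Polynomial ComplexConjugate

theorem Polynomial.sub_dvd_comp_sub {R : Type*} [CommRing R] (f u v : R[X]) :
    u - v ∣ f.comp u - f.comp v := by
  simpa only [comp, eval₂_eq_eval_map] using sub_dvd_eval_sub u v (f.map C)

theorem ZMod.comp_X_pow_card_pow {q : ℕ} [Fact q.Prime] (f : (ZMod q)[X]) (j : ℕ) :
    f.comp (X ^ q ^ j) = f ^ q ^ j := by
  have hid : iterateFrobenius (ZMod q) q j = RingHom.id _ :=
    RingHom.ext fun x => by rw [iterateFrobenius_def, ZMod.pow_card_pow, RingHom.id_apply]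
  rw [← expand_eq_comp_X_pow, ← map_iterateFrobenius_expand q f j, hid, Polynomial.map_id]

theorem sub_one_dvd_pow_add_mul_sub_pow {R : Type*} [CommRing R] (x : R) (N b t : ℕ) :
    x ^ N - 1 ∣ x ^ (b + N * t) - x ^ b := by
  have h : x ^ (b + N * t) - x ^ b = x ^ b * ((x ^ N) ^ t - 1 ^ t) := by ring
  exact h ▸ (sub_dvd_pow_sub_pow _ _ t).mul_left _

theorem ZMod.X_pow_sub_one_dvd_comp_sub_pow {q N j : ℕ} [Fact q.Prime] (h : N ∣ q ^ j + 1)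
    (f : (ZMod q)[X]) : X ^ N - 1 ∣ f.comp (X ^ (N - 1)) - f ^ q ^ j := by
  obtain ⟨t, ht⟩ := h
  obtain ⟨N, rfl⟩ := Nat.exists_eq_add_one_of_ne_zero (by rintro rfl; simp at ht : N ≠ 0)
  obtain ⟨t, rfl⟩ := Nat.exists_eq_add_one_of_ne_zero (by rintro rfl; simp at ht : t ≠ 0)
  have hq : q ^ j = N + (N + 1) * t := by linarith
  rw [← ZMod.comp_X_pow_card_pow, hq, Nat.add_sub_cancel]
  exact (dvd_sub_comm.mp (sub_one_dvd_pow_add_mul_sub_pow X (N + 1) N t)).trans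
    (sub_dvd_comp_sub f _ _)

theorem ZMod.cyclotomic_dvd_of_dvd_mul_comp {q N j : ℕ} [Fact q.Prime] (hqN : ¬ q ∣ N)
    (h : N ∣ q ^ j + 1) {f : (ZMod q)[X]}
    (hf : cyclotomic N (ZMod q) ∣ f * f.comp (X ^ (N - 1))) : cyclotomic N (ZMod q) ∣ f := by
  have hN : (N : ZMod q) ≠ 0 := by rwa [Ne, ZMod.natCast_eq_zero_iff]
  have hsq : Squarefree (cyclotomic N (ZMod q)) :=
    ((separable_X_pow_sub_C 1 hN one_ne_zero).squarefree.squarefree_of_dvd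
      (by simpa using cyclotomic.dvd_X_pow_sub_one N (ZMod q)))
  refine (hsq.dvd_pow_iff_dvd (Nat.succ_ne_zero (q ^ j))).mp ?_
  have hfrob := (cyclotomic.dvd_X_pow_sub_one N (ZMod q)).trans
    (ZMod.X_pow_sub_one_dvd_comp_sub_pow h f)
  have : f ^ (q ^ j + 1) = f * f.comp (X ^ (N - 1)) - f * (f.comp (X ^ (N - 1)) - f ^ q ^ j) := by
    ring
  exact this ▸ dvd_sub hf (hfrob.mul_left f)

theorem IsPrimitiveRoot.conj_eq_pow_sub_one {N : ℕ} {ζ : ℂ} (hζ : IsPrimitiveRoot ζ N)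
    (hN : N ≠ 0) : conj ζ = ζ ^ (N - 1) := by
  rw [← Complex.inv_eq_conj (hζ.norm'_eq_one hN)]
  refine inv_eq_of_mul_eq_one_right ?_
  rw [← pow_succ', Nat.sub_add_cancel (Nat.pos_of_ne_zero hN), hζ.pow_eq_one]

theorem IsPrimitiveRoot.conj_aeval {N : ℕ} {ζ : ℂ} (hζ : IsPrimitiveRoot ζ N) (hN : N ≠ 0)
    (P : ℤ[X]) : conj (aeval ζ P) = aeval ζ (P.comp (X ^ (N - 1))) := by
  rw [aeval_comp, aeval_X_pow, ← hζ.conj_eq_pow_sub_one hN]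
  exact (aeval_algHom_apply (starRingEnd ℂ).toIntAlgHom ζ P).symm

theorem IsPrimitiveRoot.conj_mem_adjoin {N : ℕ} {ζ : ℂ} (hζ : IsPrimitiveRoot ζ N) (hN : N ≠ 0)
    {x : ℂ} (hx : x ∈ Algebra.adjoin ℤ {ζ}) : conj x ∈ Algebra.adjoin ℤ {ζ} := by
  rw [Algebra.adjoin_singleton_eq_range_aeval] at hx ⊢
  obtain ⟨P, rfl⟩ := hx
  exact ⟨_, (hζ.conj_aeval hN P).symm⟩

theorem Int.dvd_of_isIntegral_mul_eq {K : Type*} [Field K] [CharZero K] {x : K}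
    (hx : IsIntegral ℤ x) {d c : ℤ} (hd : d ≠ 0) (h : d * x = c) : d ∣ c := by
  have hxq : x = algebraMap ℚ K (c / d) := by
    rw [map_div₀, eq_div_iff (by simpa using hd), map_intCast, map_intCast, ← h, mul_comm]
  rw [hxq, isIntegral_algebraMap_iff (algebraMap ℚ K).injective] at hx
  obtain ⟨e, he⟩ := IsIntegrallyClosed.isIntegral_iff.mp hx
  refine ⟨e, ?_⟩
  rw [algebraMap_int_eq, eq_intCast, eq_div_iff (by simpa using hd)] at he
  exact_mod_cast (he.symm.trans (mul_comm _ _))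

theorem IsPrimitiveRoot.exists_eq_mul_of_mul_conj_eq {N q j : ℕ} [Fact q.Prime] {ζ : ℂ}
    (hζ : IsPrimitiveRoot ζ N) (hqN : ¬ q ∣ N) (hqj : N ∣ q ^ j + 1)
    {x : ℂ} (hx : x ∈ Algebra.adjoin ℤ {ζ}) {c : ℤ} (hc : x * conj x = q * c) :
    ∃ y ∈ Algebra.adjoin ℤ {ζ}, x = q * y := by
  have hN : 0 < N := Nat.pos_of_ne_zero fun h => hqN (h ▸ dvd_zero q)
  rw [Algebra.adjoin_singleton_eq_range_aeval] at hx ⊢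
  obtain ⟨P, rfl⟩ := (AlgHom.mem_range _).mp hx
  have hmonic := cyclotomic.monic N ℤ
  have hdvd : cyclotomic N ℤ ∣ P * P.comp (X ^ (N - 1)) - C ((q : ℤ) * c) := by
    rw [cyclotomic_eq_minpoly hζ hN]
    refine minpoly.isIntegrallyClosed_dvd (hζ.isIntegral hN) ?_
    rw [map_sub, map_mul, ← hζ.conj_aeval hN.ne', hc, aeval_C]
    simp
  have hmod : cyclotomic N (ZMod q) ∣ P.map (Int.castRingHom (ZMod q)) := by
    refine ZMod.cyclotomic_dvd_of_dvd_mul_comp hqN hqj ?_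
    simpa [Polynomial.map_sub, Polynomial.map_mul, Polynomial.map_comp] using
      map_dvd (Int.castRingHom (ZMod q)) hdvd
  have hrem : (P %ₘ cyclotomic N ℤ).map (Int.castRingHom (ZMod q)) = 0 := by
    rwa [map_modByMonic _ hmonic, map_cyclotomic,
      modByMonic_eq_zero_iff_dvd (cyclotomic.monic N _)]
  obtain ⟨P₁, hP₁⟩ : C (q : ℤ) ∣ P %ₘ cyclotomic N ℤ := by
    refine (C_dvd_iff_dvd_coeff _ _).mpr fun i => ?_
    rw [← ZMod.intCast_zmod_eq_zero_iff_dvd]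
    simpa using congr_arg (coeff · i) hrem
  refine ⟨aeval ζ P₁, AlgHom.mem_range_self _ P₁, ?_⟩
  have hroot : aeval ζ (cyclotomic N ℤ) = 0 := by
    rw [cyclotomic_eq_minpoly hζ hN]; exact minpoly.aeval ℤ ζ
  rw [← aeval_modByMonic_eq_self_of_root hroot, hP₁, map_mul, aeval_C]
  rfl

theorem IsPrimitiveRoot.even_of_mul_conj_eq {N q j : ℕ} [Fact q.Prime] {ζ : ℂ}
    (hζ : IsPrimitiveRoot ζ N) (hqN : ¬ q ∣ N) (hqj : N ∣ q ^ j + 1) {c : ℤ}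
    (hc : ¬ (q : ℤ) ∣ c) {r : ℕ} {x : ℂ} (hx : x ∈ Algebra.adjoin ℤ {ζ})
    (hxr : x * conj x = q ^ r * c) : Even r := by
  have hN : N ≠ 0 := fun h => hqN (h ▸ dvd_zero q)
  have hq₀ : q ≠ 0 := (Fact.out : q.Prime).ne_zero
  have hq : (q : ℂ) ≠ 0 := Nat.cast_ne_zero.mpr hq₀
  induction r using Nat.strong_induction_on generalizing x with
  | _ r ih =>
  rcases r with _ | r
  · exact .zero
  obtain ⟨y, hy, rfl⟩ := hζ.exists_eq_mul_of_mul_conj_eq hqN hqj hx (c := q ^ r * c)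
    (by rw [hxr]; push_cast; ring)
  have hyy : (q : ℂ) ^ 2 * (y * conj y) = q ^ (r + 1) * c := by
    rw [← hxr, map_mul, map_natCast]; ring
  rcases r with _ | r
  · refine absurd (Int.dvd_of_isIntegral_mul_eq (x := y * conj y) ?_ (by exact_mod_cast hq₀) ?_) hc
    · exact adjoin_le_integralClosure (hζ.isIntegral (Nat.pos_of_ne_zero hN))
        (mul_mem hy (hζ.conj_mem_adjoin hN hy))
    · refine mul_left_cancel₀ hq ?_
      push_cast
      linear_combination hyy
  · have : y * conj y = q ^ r * c := by
      refine mul_left_cancel₀ (pow_ne_zero 2 hq) ?_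
      rw [hyy]; ring
    exact (ih r (by omega) hy this).add even_two

theorem sum_sum_mul_conj_add {G R : Type*} [AddCommGroup G] [Fintype G] [CommSemiring R]
    [StarRing R] (a : G → R) :
    ∑ t, ∑ i, a i * conj (a (i + t)) = (∑ i, a i) * conj (∑ i, a i) := by
  rw [Finset.sum_comm, Finset.sum_mul]
  refine Finset.sum_congr rfl fun i _ => ?_
  rw [← Finset.mul_sum, map_sum]
  exact congrArg _ (Fintype.sum_equiv (Equiv.addLeft i) _ _ fun _ => rfl)

theorem sum_mul_conj_eq_card_compl {ι : Type*} [Fintype ι] [DecidableEq ι] (a : ι → ℂ)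
    (Z : Finset ι) (hzero : ∀ i ∈ Z, a i = 0) (hunit : ∀ i ∉ Z, ‖a i‖ = 1) :
    ∑ i, a i * conj (a i) = Zᶜ.card := by
  rw [← Finset.sum_add_sum_compl Z, Finset.sum_eq_zero fun i hi => by rw [hzero i hi, zero_mul],
    zero_add, Finset.card_eq_sum_ones, Nat.cast_sum, Nat.cast_one]
  refine Finset.sum_congr rfl fun i hi => ?_
  rw [Complex.mul_conj, Complex.normSq_eq_norm_sq, hunit i (Finset.mem_compl.mp hi)]
  norm_num

theorem mul_conj_sum_eq_of_autocorrelation_eq {G : Type*} [AddCommGroup G] [Fintype G]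
    [DecidableEq G] (a : G → ℂ) (Z : Finset G) (hzero : ∀ i ∈ Z, a i = 0)
    (hunit : ∀ i ∉ Z, ‖a i‖ = 1) (γ : ℂ) (hγ : ∀ t ≠ 0, ∑ i, a i * conj (a (i + t)) = γ) :
    (∑ i, a i) * conj (∑ i, a i) = Zᶜ.card + (Fintype.card G - 1 : ℕ) * γ := by
  rw [← sum_sum_mul_conj_add, ← Finset.add_sum_erase _ _ (Finset.mem_univ 0),
    Finset.sum_congr rfl fun t ht => hγ t (Finset.ne_of_mem_erase ht), Finset.sum_const,
    Finset.card_erase_of_mem (Finset.mem_univ _), Finset.card_univ, nsmul_eq_mul]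
  simp_rw [add_zero]
  rw [sum_mul_conj_eq_card_compl a Z hzero hunit]

theorem Nat.dvd_pow_add_one_of_natCast_pow_eq_neg_one {N M q j : ℕ} (hNM : N ∣ M)
    (h : (q : ZMod M) ^ j = -1) : N ∣ q ^ j + 1 :=
  hNM.trans <| (ZMod.natCast_eq_zero_iff _ _).mp (by push_cast; rw [h]; ring)

theorem stmt_18_general (p : ℕ) (hp : p.Prime) (n s : ℕ) [NeZero (n + s)]
    (γ : ℤ)
    (ζ : ℂ) (hζ : IsPrimitiveRoot ζ p)
    (a : ZMod (n + s) → ℂ) (Z : Finset (ZMod (n + s))) (hZcard : Z.card = s)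
    (hzero : ∀ i ∈ Z, a i = 0) (hroot : ∀ i ∉ Z, ∃ k : ℕ, a i = ζ ^ k)
    (hnps : ∀ t : ZMod (n + s), t ≠ 0 →
      ∑ i : ZMod (n + s), a i * (starRingEnd ℂ) (a (i + t)) = γ)
    (q r : ℕ) (hq : q.Prime) (hqp : q ≠ p)
    (hqr : (q : ℤ) ^ r ∣ (γ + 1) * (n : ℤ) + ((s : ℤ) - 1) * γ)
    (hqr1 : ¬ (q : ℤ) ^ (r + 1) ∣ (γ + 1) * (n : ℤ) + ((s : ℤ) - 1) * γ)
    (u : ℕ) (hqu : ¬ q ∣ u)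
    (j : ℕ)
    (hsc : (q : ZMod ((u * p) / q ^ ((u * p).factorization q))) ^ j = -1) :
    Even r := by
  classical
  have : Fact q.Prime := ⟨hq⟩
  have hqp' : ¬ q ∣ p := fun h => hqp ((Nat.prime_dvd_prime_iff_eq hq hp).mp h)
  rw [Nat.factorization_eq_zero_of_not_dvd fun h => (hq.dvd_mul.mp h).elim hqu hqp', pow_zero,
    Nat.div_one] at hsc
  have hmem : ∑ i, a i ∈ Algebra.adjoin ℤ {ζ} := Subalgebra.sum_mem _ fun i _ => by
    by_cases hi : i ∈ Z
    · rw [hzero i hi]; exact zero_mem _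
    · obtain ⟨k, hk⟩ := hroot i hi
      exact hk ▸ pow_mem (Algebra.self_mem_adjoin_singleton ℤ ζ) k
  have hnorm := mul_conj_sum_eq_of_autocorrelation_eq a Z hzero (fun i hi => by
    obtain ⟨k, hk⟩ := hroot i hi
    rw [hk, norm_pow, hζ.norm'_eq_one hp.ne_zero, one_pow]) γ hnps
  rw [Finset.card_compl, ZMod.card, hZcard, Nat.add_sub_cancel,
    Nat.cast_sub (NeZero.one_le : 1 ≤ n + s)] at hnorm
  obtain ⟨c, hc⟩ := hqr
  have hqc : ¬ (q : ℤ) ∣ c := fun ⟨d, hd⟩ => hqr1 ⟨d, by rw [hc, hd]; ring⟩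
  refine hζ.even_of_mul_conj_eq hqp'
    (Nat.dvd_pow_add_one_of_natCast_pow_eq_neg_one (dvd_mul_left p u) hsc) hqc hmem ?_
  have hc' : ((γ + 1) * n + (s - 1) * γ : ℂ) = q ^ r * c := by exact_mod_cast hc
  rw [hnorm]
  push_cast
  linear_combination hc'

theorem stmt_18 (p : ℕ) (hp : p.Prime) (n s : ℕ) (hs : 1 ≤ s) [NeZero (n + s)]
    (γ : ℤ) (hγ0 : 0 < |γ|) (hγn : |γ| < (n : ℤ))
    (ζ : ℂ) (hζ : IsPrimitiveRoot ζ p)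
    (a : ZMod (n + s) → ℂ) (Z : Finset (ZMod (n + s))) (hZcard : Z.card = s)
    (hzero : ∀ i ∈ Z, a i = 0) (hroot : ∀ i ∉ Z, ∃ k : ℕ, a i = ζ ^ k)
    (hnps : ∀ t : ZMod (n + s), t ≠ 0 →
      ∑ i : ZMod (n + s), a i * (starRingEnd ℂ) (a (i + t)) = γ)
    (q r : ℕ) (hq : q.Prime) (hqp : q ≠ p)
    (hqr : (q : ℤ) ^ r ∣ (γ + 1) * (n : ℤ) + ((s : ℤ) - 1) * γ)
    (hqr1 : ¬ (q : ℤ) ^ (r + 1) ∣ (γ + 1) * (n : ℤ) + ((s : ℤ) - 1) * γ)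
    (u : ℕ) (hu : u ∣ n + s) (hu1 : 1 ≤ u) (hqu : ¬ q ∣ u)
    (j : ℕ)
    (hsc : (q : ZMod ((u * p) / q ^ ((u * p).factorization q))) ^ j = -1) :
    Even r :=
  stmt_18_general p hp n s γ ζ hζ a Z hZcard hzero hroot hnps q r hq hqp hqr hqr1 u hqu j hsc
end
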